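/- arXiv:2201.00595 — 18 statements merged into one kernel-verified Lean document; each statement's English description precedes it below -/
import Mathlib

section
/- Let L be a completely semidistributive lattice and suppose a covers b in L. Then the set {x ∈ L | b ∨ x = a} has a minimum element, and this minimum element is completely join-irreducible. Dually, the set {x ∈ L | a ∧ x = b} has a maximum element, and this maximum element is completely meet-irreducible. -/
/-- In a completely semidistributive lattice, for a covering `b ⋖ a`,
the set `{x | b ⊔ x = a}` has a minimum element which is completely join-irreducible,
and the set `{x | a ⊓ x = b}` has a maximum element which is completely meet-irreducible. -/
theorem stmt_0 {α : Type*} [CompleteLattice α]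
    (hSDj : ∀ (a b : α) (X : Set α), X.Nonempty → (∀ x ∈ X, a ⊔ x = b) → a ⊔ sInf X = b)
    (hSDm : ∀ (a b : α) (X : Set α), X.Nonempty → (∀ x ∈ X, a ⊓ x = b) → a ⊓ sSup X = b)
    {a b : α} (hab : b ⋖ a) :
    (∃ j : α, IsLeast {x : α | b ⊔ x = a} j ∧ ∀ X : Set α, j = sSup X → j ∈ X) ∧
    (∃ m : α, IsGreatest {x : α | a ⊓ x = b} m ∧ ∀ X : Set α, m = sInf X → m ∈ X) := by
  have hba : b < a := hab.lt
  constructor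
  · set S : Set α := {x : α | b ⊔ x = a} with hS
    have haS : a ∈ S := by simp [hS, sup_eq_right.mpr hba.le]
    have hne : S.Nonempty := ⟨a, haS⟩
    have hjS : sInf S ∈ S := hSDj b a S hne (fun x hx => hx)
    set j := sInf S with hj
    have hleast : IsLeast S j := ⟨hjS, fun x hx => sInf_le hx⟩
    refine ⟨j, hleast, fun X hX => ?_⟩
    by_cases hall : ∀ x ∈ X, x ≤ b
    · exfalso
      have : j ≤ b := hX ▸ sSup_le hall
      have : b ⊔ j = b := sup_eq_left.mpr this
      rw [hjS] at this
      exact hba.ne this.symm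
    · push_neg at hall
      obtain ⟨x, hxX, hxb⟩ := hall
      have hxj : x ≤ j := hX ▸ le_sSup hxX
      have h1 : b ≤ b ⊔ x := le_sup_left
      have h2 : b ⊔ x ≤ a := sup_le hba.le (hxj.trans (by
        calc j ≤ b ⊔ j := le_sup_right
        _ = a := hjS))
      have : b ⊔ x = b ∨ b ⊔ x = a := hab.eq_or_eq h1 h2
      rcases this with h | h
      · exact absurd (sup_eq_left.mp h) hxb
      · have : j ≤ x := hleast.2 h
        have : j = x := le_antisymm this hxj
        exact this ▸ hxX
  · set S : Set α := {x : α | a ⊓ x = b} with hS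
    have haS : b ∈ S := by simp [hS, inf_eq_right.mpr hba.le]
    have hne : S.Nonempty := ⟨b, haS⟩
    have hmS : sSup S ∈ S := hSDm a b S hne (fun x hx => hx)
    set m := sSup S with hm
    have hgr : IsGreatest S m := ⟨hmS, fun x hx => le_sSup hx⟩
    refine ⟨m, hgr, fun X hX => ?_⟩
    by_cases hall : ∀ x ∈ X, a ≤ x
    · exfalso
      have : a ≤ m := hX ▸ le_sInf hall
      have : a ⊓ m = a := inf_eq_left.mpr this
      rw [hmS] at this
      exact hba.ne this
    · push_neg at hall
      obtain ⟨x, hxX, hxa⟩ := hall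
      have hmx : m ≤ x := hX ▸ sInf_le hxX
      have h1 : a ⊓ x ≤ a := inf_le_left
      have h2 : b ≤ a ⊓ x := le_inf hba.le (le_trans (by
        calc b = a ⊓ m := hmS.symm
        _ ≤ m := inf_le_right) hmx)
      have : a ⊓ x = b ∨ a ⊓ x = a := hab.eq_or_eq h2 h1
      rcases this with h | h
      · have : x ≤ m := hgr.2 h
        exact (le_antisymm hmx this) ▸ hxX
      · exact absurd (inf_eq_left.mp h) hxa
end

section
/- Let L be a completely semidistributive lattice and suppose a covers b in L. Then an element j ∈ L is the minimum of the set {x ∈ L | b ∨ x = a} if and only if b ∨ j = a and b ∧ j = j_*, where j_* := ⨆{x ∈ L | x < j}. -/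
/-- In a completely semidistributive lattice, for a covering `b ⋖ a`,
an element `j` is the minimum of `{x | b ⊔ x = a}` iff `b ⊔ j = a` and
`b ⊓ j = j_*`, where `j_* = ⨆ {x | x < j}`. -/
theorem stmt_1 {α : Type*} [CompleteLattice α]
    (hSDj : ∀ (a b : α) (X : Set α), X.Nonempty → (∀ x ∈ X, a ⊔ x = b) → a ⊔ sInf X = b)
    (hSDm : ∀ (a b : α) (X : Set α), X.Nonempty → (∀ x ∈ X, a ⊓ x = b) → a ⊓ sSup X = b)
    {a b : α} (hab : b ⋖ a) (j : α) :
    IsLeast {x : α | b ⊔ x = a} j ↔ (b ⊔ j = a ∧ b ⊓ j = sSup {x : α | x < j}) := by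
  have hba : b < a := hab.lt
  constructor
  · rintro ⟨hj, hmin⟩
    refine ⟨hj, le_antisymm ?_ (le_inf (sSup_le fun x hx => ?_) (sSup_le fun x hx => le_of_lt hx))⟩
    · refine le_sSup ?_
      refine lt_of_le_of_ne inf_le_right fun h => ?_
      have hjb : j ≤ b := h ▸ inf_le_left
      exact hba.ne (by rw [← hj, sup_eq_left.mpr hjb])
    · -- x < j ⟹ x ≤ b
      rcases hab.eq_or_eq (c := b ⊔ x) le_sup_left (by rw [← hj]; exact sup_le_sup_left hx.le b) with h | h
      · exact sup_eq_left.mp h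
      · exact absurd (hmin h) (not_le_of_gt hx)
  · rintro ⟨hj, hstar⟩
    have hne : ({x : α | b ⊔ x = a}).Nonempty := ⟨j, hj⟩
    have hm : b ⊔ sInf {x : α | b ⊔ x = a} = a := hSDj b a _ hne fun x hx => hx
    have hle : sInf {x : α | b ⊔ x = a} ≤ j := sInf_le hj
    have heq : sInf {x : α | b ⊔ x = a} = j := by
      rcases lt_or_eq_of_le hle with h | h
      · have h1 : sInf {x : α | b ⊔ x = a} ≤ b := (le_sSup (show _ ∈ {x : α | x < j} from h)).trans (hstar ▸ inf_le_left : sSup {x : α | x < j} ≤ b)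
        exact absurd (hm ▸ sup_eq_left.mpr h1) hba.ne'
      · exact h
    exact ⟨hj, fun x hx => heq ▸ sInf_le hx⟩
end

section
/- Let L be a completely semidistributive lattice and suppose a covers b in L. Then an element m ∈ L is the maximum of the set {x ∈ L | a ∧ x = b} if and only if a ∧ m = b and a ∨ m = m^*, where m^* := ⨅{x ∈ L | x > m}. -/
/-- In a completely semidistributive lattice, for a covering `b ⋖ a`,
an element `m` is the maximum of `{x | a ⊓ x = b}` iff `a ⊓ m = b` and
`a ⊔ m = m^*`, where `m^* = ⨅ {x | m < x}`. -/
theorem stmt_2 {α : Type*} [CompleteLattice α]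
    (hSDj : ∀ (a b : α) (X : Set α), X.Nonempty → (∀ x ∈ X, a ⊔ x = b) → a ⊔ sInf X = b)
    (hSDm : ∀ (a b : α) (X : Set α), X.Nonempty → (∀ x ∈ X, a ⊓ x = b) → a ⊓ sSup X = b)
    {a b : α} (hab : b ⋖ a) (m : α) :
    IsGreatest {x : α | a ⊓ x = b} m ↔ (a ⊓ m = b ∧ a ⊔ m = sInf {x : α | m < x}) := by
  constructor
  · rintro ⟨hm, hmax⟩
    refine ⟨hm, le_antisymm ?_ ?_⟩
    · -- a ⊔ m is a lower bound of {x | m < x}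
      apply le_sInf
      intro y hy
      have hyS : a ⊓ y ≠ b := by
        intro h
        exact hy.not_ge (hmax h)
      have hb : b ≤ a ⊓ y := hm ▸ inf_le_inf_left a hy.le
      have : a ⊓ y = b ∨ a ⊓ y = a := by
        rcases hb.lt_or_eq with h | h
        · right; exact inf_le_left.lt_or_eq.resolve_left (hab.2 h)
        · left; exact h.symm
      rcases this with h | h
      · exact absurd h hyS
      · exact sup_le (le_of_inf_eq h) hy.le
    · -- a ⊔ m ∈ {x | m < x}
      apply sInf_le
      have : ¬ a ≤ m := fun h => hab.1.ne' ((inf_eq_left.mpr h).symm.trans hm)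
      exact lt_of_le_of_ne le_sup_right (fun h => this (h ▸ le_sup_left))
  · rintro ⟨hm, hs⟩
    set S : Set α := {x : α | a ⊓ x = b} with hS
    have hMS : a ⊓ sSup S = b := hSDm a b S ⟨m, hm⟩ (fun x hx => hx)
    have hmM : m ≤ sSup S := le_sSup hm
    have hEq : m = sSup S := by
      rcases hmM.lt_or_eq with hlt | h
      · exfalso
        have h1 : sInf {x : α | m < x} ≤ sSup S := sInf_le hlt
        have h2 : a ≤ sSup S := le_trans le_sup_left (hs ▸ h1)
        have : a ⊓ sSup S = a := inf_eq_left.mpr h2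
        exact hab.1.ne (this ▸ hMS).symm
      · exact h
    exact ⟨hm, fun x hx => hEq ▸ le_sSup hx⟩
end

section
/- Let L be a completely semidistributive lattice. For a completely join-irreducible j, let κ(j) be the greatest element of {x ∈ L | j ∧ x = j_*}, and for a completely meet-irreducible m, let κ^d(m) be the least element of {x ∈ L | m ∨ x = m^*}. Then κ(j) is completely meet-irreducible for every completely join-irreducible j, κ^d(m) is completely join-irreducible for every completely meet-irreducible m, and κ and κ^d are mutually inverse: κ^d(κ(j)) = j and κ(κ^d(m)) = m. -/
/-- In a completely semidistributive lattice, `κ` sends completely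
join-irreducible elements to completely meet-irreducible ones, `κᵈ` does the dual,
and they are mutually inverse. Here `κ j` is the greatest element of
`{x | j ⊓ x = j_*}` and `κᵈ m` is the least element of `{x | m ⊔ x = m^*}`. -/
theorem stmt_3 {α : Type*} [CompleteLattice α]
    (hSDj : ∀ (a b : α) (X : Set α), X.Nonempty → (∀ x ∈ X, a ⊔ x = b) → a ⊔ sInf X = b)
    (hSDm : ∀ (a b : α) (X : Set α), X.Nonempty → (∀ x ∈ X, a ⊓ x = b) → a ⊓ sSup X = b) :
    (∀ j k : α, j ≠ sSup {x : α | x < j} →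
      IsGreatest {x : α | j ⊓ x = sSup {y : α | y < j}} k →
        k ≠ sInf {x : α | k < x} ∧ IsLeast {x : α | k ⊔ x = sInf {y : α | k < y}} j) ∧
    (∀ m j : α, m ≠ sInf {x : α | m < x} →
      IsLeast {x : α | m ⊔ x = sInf {y : α | m < y}} j →
        j ≠ sSup {x : α | x < j} ∧ IsGreatest {x : α | j ⊓ x = sSup {y : α | y < j}} m) := by
  constructor
  · intro j k hj hk
    set js := sSup {y : α | y < j} with hjsdef
    have hjk : j ⊓ k = js := hk.1
    have hjs_le : js ≤ j := sSup_le fun y hy => hy.le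
    have hjs_lt : js < j := lt_of_le_of_ne hjs_le fun h => hj h.symm
    have hjsk : js ≤ k := hjk ▸ inf_le_right
    have hjnk : ¬ j ≤ k := fun h => hjs_lt.ne' (by rw [← hjk, inf_eq_left.2 h])
    have hklt : k < k ⊔ j :=
      lt_of_le_of_ne le_sup_left fun h => hjnk (sup_eq_left.1 h.symm)
    have hstep : ∀ x, k < x → j ≤ x := by
      intro x hx
      by_contra hnx
      have h1 : j ⊓ x < j := lt_of_le_of_ne inf_le_left fun h => hnx (h ▸ inf_le_right)
      have h3 : j ⊓ x = js := le_antisymm (le_sSup h1) (le_inf hjs_le (hjsk.trans hx.le))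
      exact hx.not_ge (hk.2 h3)
    have hks : sInf {x : α | k < x} = k ⊔ j := by
      refine le_antisymm (sInf_le hklt) (le_sInf fun x hx => sup_le hx.le (hstep x hx))
    refine ⟨fun h => hklt.ne (h.trans hks), ?_, ?_⟩
    · show k ⊔ j = _
      rw [hks]
    · intro x hx
      have hx' : k ⊔ x = sInf {y : α | k < y} := hx
      have hsd : k ⊔ sInf {x, j} = sInf {y : α | k < y} := by
        refine hSDj k _ {x, j} ⟨x, Or.inl rfl⟩ ?_
        rintro z (rfl | rfl)
        · exact hx'
        · rw [hks]
      rw [sInf_pair, hks] at hsd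
      have hnle : ¬ x ⊓ j ≤ k := by
        intro h
        have : k ⊔ (x ⊓ j) = k := sup_eq_left.2 h
        rw [this] at hsd
        exact hklt.ne hsd
      have : x ⊓ j = j := by
        rcases lt_or_eq_of_le (inf_le_right : x ⊓ j ≤ j) with h | h
        · have hm : x ⊓ j ∈ {y : α | y < j} := h
          exact absurd ((le_sSup hm).trans hjsk) hnle
        · exact h
      exact inf_eq_right.1 this
  · intro m j hm hj
    set ms := sInf {y : α | m < y} with hmsdef
    have hmj : m ⊔ j = ms := hj.1
    have hms_le : m ≤ ms := le_sInf fun y hy => hy.le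
    have hms_lt : m < ms := lt_of_le_of_ne hms_le hm
    have hmsj : j ≤ ms := hmj ▸ le_sup_right
    have hjnm : ¬ j ≤ m := fun h => hms_lt.ne (by rw [← hmj, sup_eq_left.2 h])
    have hjlt : m ⊓ j < j :=
      lt_of_le_of_ne inf_le_right fun h => hjnm (inf_eq_right.1 h)
    have hstep : ∀ x, x < j → x ≤ m := by
      intro x hx
      by_contra hnx
      have h1 : m < m ⊔ x := lt_of_le_of_ne le_sup_left fun h => hnx (h ▸ le_sup_right)
      have h3 : m ⊔ x = ms := le_antisymm (sup_le hms_le (hx.le.trans hmsj)) (sInf_le h1)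
      exact hx.not_ge (hj.2 h3)
    have hjs : sSup {x : α | x < j} = m ⊓ j := by
      refine le_antisymm (sSup_le fun x hx => le_inf (hstep x hx) hx.le) (le_sSup hjlt)
    refine ⟨fun h => hjlt.ne' (by rw [← hjs, ← h]), ?_, ?_⟩
    · show j ⊓ m = _
      rw [hjs, inf_comm]
    · intro x hx
      have hx' : j ⊓ x = sSup {y : α | y < j} := hx
      have hsd : j ⊓ sSup {x, m} = sSup {y : α | y < j} := by
        refine hSDm j _ {x, m} ⟨x, Or.inl rfl⟩ ?_
        rintro z (rfl | rfl)
        · exact hx'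
        · rw [hjs, inf_comm]
      rw [sSup_pair, hjs] at hsd
      have : x ⊔ m = m := by
        rcases lt_or_eq_of_le (le_sup_right : m ≤ x ⊔ m) with h | h
        · have hjle : j ≤ x ⊔ m := hmsj.trans (sInf_le h)
          have : j ⊓ (x ⊔ m) = j := inf_eq_left.2 hjle
          rw [this] at hsd
          exact absurd hsd hjlt.ne'
        · exact h.symm
      exact sup_eq_right.1 this
end

section
/- Let L be a completely semidistributive lattice and suppose a covers b in L. Then μ(a→b) = κ(γ(a→b)), i.e., the maximum of {x ∈ L | a ∧ x = b} equals κ applied to the minimum of {x ∈ L | b ∨ x = a}. -/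
/-- In a completely semidistributive lattice, for a covering `b ⋖ a`,
the meet-irreducible label `μ(a→b)` (the maximum of `{x | a ⊓ x = b}`) equals `κ`
applied to the join-irreducible label `γ(a→b)` (the minimum of `{x | b ⊔ x = a}`),
i.e. `μ(a→b)` is the greatest element of `{x | γ(a→b) ⊓ x = γ(a→b)_*}`. -/
theorem stmt_4 {α : Type*} [CompleteLattice α]
    (hSDj : ∀ (a b : α) (X : Set α), X.Nonempty → (∀ x ∈ X, a ⊔ x = b) → a ⊔ sInf X = b)
    (hSDm : ∀ (a b : α) (X : Set α), X.Nonempty → (∀ x ∈ X, a ⊓ x = b) → a ⊓ sSup X = b)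
    {a b : α} (hab : b ⋖ a) (j m : α)
    (hj : IsLeast {x : α | b ⊔ x = a} j)
    (hm : IsGreatest {x : α | a ⊓ x = b} m) :
    IsGreatest {x : α | j ⊓ x = sSup {y : α | y < j}} m := by
  obtain ⟨hjmem, hjmin⟩ := hj
  obtain ⟨hmmem, hmmax⟩ := hm
  have hjmem : b ⊔ j = a := hjmem
  have hmmem : a ⊓ m = b := hmmem
  set p : α := sSup {y : α | y < j} with hp
  have hba : b < a := hab.lt
  have hja : j ≤ a := hjmem ▸ le_sup_right
  have hjb : ¬ j ≤ b := fun h => hba.ne (by rw [← hjmem, sup_eq_left.2 h])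
  -- every element strictly below j lies below b
  have hyb : ∀ y, y < j → y ≤ b := by
    intro y hy
    by_contra hyb'
    have h1 : b ≠ b ⊔ y := fun h => hyb' (sup_eq_left.1 h.symm)
    have h2 : b ⊔ y ≤ a := by
      rw [← hjmem]; exact sup_le_sup_left hy.le _
    have h3 : b ⊔ y = a := (hab.eq_or_eq le_sup_left h2).resolve_left fun h => h1 h.symm
    exact hy.not_ge (hjmin h3)
  have hpb : p ≤ b := sSup_le fun y hy => hyb y hy
  have hpj : p ≤ j := sSup_le fun y hy => hy.le
  -- j ⊓ b = p
  have hjbp : j ⊓ b = p := by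
    refine le_antisymm (le_sSup ?_) (le_inf hpj hpb)
    exact lt_of_le_of_ne inf_le_left fun h => hjb (inf_eq_left.1 h)
  -- m is in the set
  have hmemS : j ⊓ m = p := by
    calc j ⊓ m = (j ⊓ a) ⊓ m := by rw [inf_eq_left.2 hja]
    _ = j ⊓ (a ⊓ m) := inf_assoc j a m
    _ = j ⊓ b := by rw [hmmem]
    _ = p := hjbp
  refine ⟨hmemS, ?_⟩
  intro x hx
  have hx : j ⊓ x = p := hx
  set S : Set α := {x : α | j ⊓ x = p} with hS
  have hK : j ⊓ sSup S = p := hSDm j p S ⟨m, hmemS⟩ fun y hy => hy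
  have hbS : b ∈ S := by simpa [hS] using hjbp
  have hbK : b ≤ sSup S := le_sSup hbS
  have hjK : ¬ j ≤ sSup S := by
    intro h
    have : j = p := by rw [← hK, inf_eq_left.2 h]
    exact hjb (this ▸ hpb)
  have haK : a ⊓ sSup S = b := by
    rcases hab.eq_or_eq (le_inf hba.le hbK) inf_le_left with h | h
    · exact h.symm ▸ rfl
    · exact absurd (le_trans hja (inf_eq_left.1 h)) hjK
  exact le_trans (le_sSup hx) (hmmax haK)
end

section
/- Let L be a completely semidistributive lattice and j ∈ L completely join-irreducible. Then j ∨ κ(j) = κ(j)^* and j ∧ κ(j) = j_*, where j_* := ⨆{x ∈ L | x < j} and κ(j)^* := ⨅{x ∈ L | x > κ(j)}. -/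
/-- In a completely semidistributive lattice, for a completely
join-irreducible `j` (i.e. `j ≠ j_*`) with `κ j` the greatest element of
`{x | j ⊓ x = j_*}`, we have `j ⊔ κ j = (κ j)^*` and `j ⊓ κ j = j_*`. -/
theorem stmt_5 {α : Type*} [CompleteLattice α]
    (hSDj : ∀ (a b : α) (X : Set α), X.Nonempty → (∀ x ∈ X, a ⊔ x = b) → a ⊔ sInf X = b)
    (hSDm : ∀ (a b : α) (X : Set α), X.Nonempty → (∀ x ∈ X, a ⊓ x = b) → a ⊓ sSup X = b)
    (j : α) (hj : j ≠ sSup {x : α | x < j}) (k : α)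
    (hk : IsGreatest {x : α | j ⊓ x = sSup {y : α | y < j}} k) :
    j ⊔ k = sInf {x : α | k < x} ∧ j ⊓ k = sSup {x : α | x < j} := by
  have h1 : j ⊓ k = sSup {y : α | y < j} := hk.1
  have hjk : ¬ j ≤ k := by
    intro h
    exact hj (by rw [← h1, inf_eq_left.mpr h])
  have hklt : k < j ⊔ k := lt_of_le_of_ne le_sup_right
    (fun h => hjk (le_trans le_sup_left h.ge))
  refine ⟨le_antisymm ?_ (sInf_le hklt), h1⟩
  refine sup_le (le_sInf fun x hx => ?_) (le_sInf fun x hx => hx.le)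
  by_contra hjx
  have hlt : j ⊓ x < j := lt_of_le_of_ne inf_le_left (fun h => hjx (h ▸ inf_le_right))
  have h2 : j ⊓ x ≤ sSup {y : α | y < j} := le_sSup hlt
  have h3 : sSup {y : α | y < j} ≤ j ⊓ x := by
    rw [← h1]; exact le_inf inf_le_left (le_trans inf_le_right hx.le)
  exact absurd (hk.2 (le_antisymm h2 h3)) (not_le_of_gt hx)
end

section
/- Let A be an abelian category and B a brick in A (i.e., End(B) is a division ring). Let T(B) be the smallest torsion class of A containing B. Then for every object M in T(B), every nonzero morphism M → B is an epimorphism. -/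
open CategoryTheory CategoryTheory.Limits

/-- A torsion class in an abelian category: a class of objects closed under
quotients (epimorphic images) and extensions. -/
def IsTorsionClass {C : Type*} [Category C] [Abelian C] (T : Set C) : Prop :=
  (∀ ⦃X Y : C⦄ (f : X ⟶ Y), Epi f → X ∈ T → Y ∈ T) ∧
  (∀ S : ShortComplex C, S.ShortExact → S.X₁ ∈ T → S.X₃ ∈ T → S.X₂ ∈ T)

/-- The smallest torsion class containing a class of objects. -/
def torsionClosure {C : Type*} [Category C] [Abelian C] (S : Set C) : Set C :=
  sInf {T : Set C | IsTorsionClass T ∧ S ⊆ T}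

/-- if `B` is a brick (its endomorphism ring is a division ring),
then every nonzero morphism `M ⟶ B` with `M` in the smallest torsion class
containing `B` is an epimorphism. -/
theorem stmt_6 {C : Type*} [Category C] [Abelian C] (B : C)
    (hB₀ : (𝟙 B : B ⟶ B) ≠ 0)
    (hB : ∀ f : B ⟶ B, f ≠ 0 → IsIso f)
    (M : C) (hM : M ∈ torsionClosure {B}) (f : M ⟶ B) (hf : f ≠ 0) :
    Epi f := by
  set T : Set C := {X | ∀ g : X ⟶ B, g ≠ 0 → Epi g} with hT
  have hTtc : IsTorsionClass T := by
    constructor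
    · intro X Y e he hX g hg
      have hne : e ≫ g ≠ 0 := by
        intro h
        apply hg
        have := he
        exact (cancel_epi e).mp (by simpa using h)
      have : Epi (e ≫ g) := hX _ hne
      exact epi_of_epi e g
    · intro S hS h1 h3 g hg
      by_cases hfz : S.f ≫ g = 0
      · have hepi : Epi S.g := hS.epi_g
        have hd := hS.exact.g_desc g hfz
        have hne : hS.exact.desc g hfz ≠ 0 := by
          intro h
          apply hg
          rw [← hd, h, comp_zero]
        have : Epi (hS.exact.desc g hfz) := h3 _ hne
        rw [← hd]
        exact epi_comp _ _
      · have : Epi (S.f ≫ g) := h1 _ hfz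
        exact epi_of_epi S.f g
  have hBT : B ∈ T := fun g hg => by
    have := hB g hg
    infer_instance
  have : T ∈ {T : Set C | IsTorsionClass T ∧ {B} ⊆ T} :=
    ⟨hTtc, by simpa using hBT⟩
  exact hM T this f hf
end

section
/- Let A be an abelian category, B a brick in A, and T a torsion class in A. Then T is strictly contained in T(B) if and only if T ⊆ T(B) ∩ ^⊥B, where ^⊥B = {M | Hom(M, B) = 0}. -/
open CategoryTheory CategoryTheory.Limits

/-- for a brick `B` and a torsion class `T`, `T` is strictly contained
in `T(B)` iff `T ⊆ T(B) ∩ ^⊥B`, where `^⊥B = {M | Hom(M, B) = 0}`. -/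
theorem stmt_7 {C : Type*} [Category C] [Abelian C] (B : C)
    (hB₀ : (𝟙 B : B ⟶ B) ≠ 0)
    (hB : ∀ f : B ⟶ B, f ≠ 0 → IsIso f)
    (T : Set C) (hT : IsTorsionClass T) :
    T ⊂ torsionClosure {B} ↔
      T ⊆ torsionClosure {B} ∩ {M : C | ∀ f : M ⟶ B, f = 0} := by
  -- B is in its torsion closure
  have hBmem : B ∈ torsionClosure {B} := fun T' hT' => hT'.2 rfl
  -- the auxiliary class T' = {M | every map M → B is zero or epi} is a torsion
  -- class containing B, hence contains torsionClosure {B}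
  have hT'sub : torsionClosure {B} ⊆ {M : C | ∀ f : M ⟶ B, f = 0 ∨ Epi f} := by
    apply sInf_le
    refine ⟨⟨?_, ?_⟩, ?_⟩
    · intro X Y p hp hX f
      rcases hX (p ≫ f) with h | h
      · left
        exact (cancel_epi p).1 (by simpa using h)
      · right
        exact epi_of_epi p f
    · intro S hS h1 h3 f
      rcases h1 (S.f ≫ f) with h | h
      · haveI : Epi S.g := hS.epi_g
        have hex := hS.exact
        rcases h3 (hex.desc f h) with h0 | he
        · left
          rw [← hex.g_desc f h, h0, comp_zero]
        · right
          rw [← hex.g_desc f h]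
          exact epi_comp _ _
      · right
        exact epi_of_epi S.f f
    · intro x hx
      rcases hx with rfl
      intro f
      by_cases h0 : f = 0
      · exact Or.inl h0
      · haveI := hB f h0
        exact Or.inr inferInstance
  constructor
  · rintro ⟨hsub, hne⟩
    intro M hM
    refine ⟨hsub hM, fun f => ?_⟩
    by_contra hf0
    rcases hT'sub (hsub hM) f with h | h
    · exact hf0 h
    · -- then B is an epimorphic image of M ∈ T, so B ∈ T,
      -- hence torsionClosure {B} ⊆ T, contradicting strictness
      have hBT : B ∈ T := hT.1 f h hM
      have : torsionClosure {B} ⊆ T := sInf_le ⟨hT, by simpa using hBT⟩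
      exact hne this
  · intro h
    refine ⟨fun M hM => (h hM).1, fun hsub => ?_⟩
    have : B ∈ T := hsub hBmem
    exact hB₀ ((h this).2 (𝟙 B))
end

section
/- Let A be an abelian category and B a brick in A. Consider the complete lattice of torsion classes of A, ordered by inclusion (meets are intersections). Then T(B) is completely join-irreducible in this lattice, and the join of all torsion classes strictly contained in T(B) equals T(B) ∩ ^⊥B. -/
open CategoryTheory CategoryTheory.Limits

section Aux

variable {C : Type*} [Category C] [Abelian C]

lemma subset_torsionClosure (S : Set C) : S ⊆ torsionClosure S := by
  intro x hx
  rw [torsionClosure, Set.sInf_eq_sInter, Set.mem_sInter]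
  exact fun T hT => hT.2 hx

lemma torsionClosure_isTorsionClass (S : Set C) : IsTorsionClass (torsionClosure S) := by
  constructor
  · intro X Y f hf hX
    rw [torsionClosure, Set.sInf_eq_sInter, Set.mem_sInter] at hX ⊢
    exact fun T hT => hT.1.1 f hf (hX T hT)
  · intro Sc hSc h1 h3
    rw [torsionClosure, Set.sInf_eq_sInter, Set.mem_sInter] at h1 h3 ⊢
    exact fun T hT => hT.1.2 Sc hSc (h1 T hT) (h3 T hT)

lemma torsionClosure_minimal {S T : Set C} (hT : IsTorsionClass T) (hST : S ⊆ T) :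
    torsionClosure S ⊆ T := fun x hx => by
  rw [torsionClosure, Set.sInf_eq_sInter, Set.mem_sInter] at hx
  exact hx T ⟨hT, hST⟩

/-- `^⊥ B` is a torsion class. -/
lemma perp_isTorsionClass (B : C) : IsTorsionClass {M : C | ∀ f : M ⟶ B, f = 0} := by
  constructor
  · intro X Y f hf hX g
    have : f ≫ g = 0 := hX _
    rw [← cancel_epi f, this, comp_zero]
  · intro S hS h1 h3 φ
    have hzero : S.f ≫ φ = 0 := h1 _
    have := hS.epi_g
    have hd : S.g ≫ hS.exact.desc φ hzero = φ := hS.exact.g_desc φ hzero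
    rw [← hd, h3 (hS.exact.desc φ hzero), comp_zero]

/-- The class of objects all of whose maps to `B` are zero or epi is a torsion class. -/
lemma epiClass_isTorsionClass (B : C) :
    IsTorsionClass {M : C | ∀ f : M ⟶ B, f = 0 ∨ Epi f} := by
  constructor
  · intro X Y f hf hX g
    rcases hX (f ≫ g) with h | h
    · exact Or.inl (by rw [← cancel_epi f, h, comp_zero])
    · exact Or.inr (epi_of_epi f g)
  · intro S hS h1 h3 φ
    have := hS.epi_g
    rcases h1 (S.f ≫ φ) with h | h
    · -- φ factors through X₃
      rcases h3 (hS.exact.desc φ h) with h' | h'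
      · left
        rw [← hS.exact.g_desc φ h, h', comp_zero]
      · right
        rw [← hS.exact.g_desc φ h]
        exact epi_comp _ _
    · exact Or.inr (epi_of_epi S.f φ)

end Aux

/-- for a brick `B`, in the complete lattice of torsion classes the
join of all torsion classes strictly contained in `T(B)` equals `T(B) ∩ ^⊥B`;
in particular it differs from `T(B)`, i.e. `T(B)` is completely join-irreducible. -/
theorem stmt_8 {C : Type*} [Category C] [Abelian C] (B : C)
    (hB₀ : (𝟙 B : B ⟶ B) ≠ 0)
    (hB : ∀ f : B ⟶ B, f ≠ 0 → IsIso f) :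
    torsionClosure (⋃₀ {T : Set C | IsTorsionClass T ∧ T ⊂ torsionClosure {B}}) =
      torsionClosure {B} ∩ {M : C | ∀ f : M ⟶ B, f = 0} ∧
    torsionClosure {B} ≠
      torsionClosure (⋃₀ {T : Set C | IsTorsionClass T ∧ T ⊂ torsionClosure {B}}) := by
  classical
  set T : Set C := torsionClosure {B} with hT
  have hTtors : IsTorsionClass T := torsionClosure_isTorsionClass _
  have hBT : B ∈ T := subset_torsionClosure {B} rfl
  -- every object of T has all maps to B zero or epi
  have hW : T ⊆ {M : C | ∀ f : M ⟶ B, f = 0 ∨ Epi f} := by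
    apply torsionClosure_minimal (epiClass_isTorsionClass B)
    intro x hx
    rcases hx with rfl
    intro f
    by_cases h : f = 0
    · exact Or.inl h
    · have := hB f h
      exact Or.inr inferInstance
  set D : Set C := T ∩ {M : C | ∀ f : M ⟶ B, f = 0} with hD
  have hDtors : IsTorsionClass D := by
    obtain ⟨hq, he⟩ := hTtors
    obtain ⟨hq', he'⟩ := perp_isTorsionClass B
    exact ⟨fun X Y f hf hX => ⟨hq f hf hX.1, hq' f hf hX.2⟩,
      fun S hS h1 h3 => ⟨he S hS h1.1 h3.1, he' S hS h1.2 h3.2⟩⟩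
  have hBnotD : B ∉ D := fun h => hB₀ (h.2 (𝟙 B))
  have hDssT : D ⊂ T := ⟨Set.inter_subset_left, fun h => hBnotD (h hBT)⟩
  -- every torsion class strictly contained in T is contained in D
  have key : ∀ S : Set C, IsTorsionClass S → S ⊂ T → S ⊆ D := by
    intro S hStors hSsub
    intro X hX
    refine ⟨hSsub.1 hX, fun f => ?_⟩
    by_contra hf
    have hepi : Epi f := by
      rcases hW (hSsub.1 hX) f with h | h
      · exact absurd h hf
      · exact h
    have hBS : B ∈ S := hStors.1 f hepi hX
    have : T ⊆ S := torsionClosure_minimal hStors (by rintro x rfl; exact hBS)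
    exact hSsub.2 this
  have hunion : ⋃₀ {S : Set C | IsTorsionClass S ∧ S ⊂ torsionClosure {B}} = D := by
    apply Set.Subset.antisymm
    · rintro x ⟨S, ⟨hS1, hS2⟩, hx⟩
      exact key S hS1 hS2 hx
    · intro x hx
      exact ⟨D, ⟨hDtors, hDssT⟩, hx⟩
  have hclD : torsionClosure D = D :=
    Set.Subset.antisymm (torsionClosure_minimal hDtors (le_refl D)) (subset_torsionClosure D)
  rw [hunion, hclD]
  exact ⟨rfl, fun h => hBnotD (h ▸ hBT)⟩
end

section
/- Let Λ be an Artinian ring and let B₁, B₂ be finitely generated Λ-modules that are bricks. If the smallest torsion class of the category of finitely generated Λ-modules containing B₁ equals the smallest torsion class containing B₂, then B₁ and B₂ are isomorphic. -/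
universe u

/-- A torsion class in the category of finitely generated `Λ`-modules: a class of
finitely generated modules closed under quotient modules and extensions. -/
def IsTorsionClassPred (Λ : Type u) [Ring Λ]
    (T : ∀ (M : Type u) [AddCommGroup M] [Module Λ M], Prop) : Prop :=
  (∀ (M : Type u) [AddCommGroup M] [Module Λ M], T M → Module.Finite Λ M) ∧
  (∀ (M N : Type u) [AddCommGroup M] [Module Λ M] [AddCommGroup N] [Module Λ N]
      (f : M →ₗ[Λ] N), Function.Surjective f → T M → T N) ∧
  (∀ (L M N : Type u) [AddCommGroup L] [Module Λ L] [AddCommGroup M] [Module Λ M]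
      [AddCommGroup N] [Module Λ N] (f : L →ₗ[Λ] M) (g : M →ₗ[Λ] N),
      Function.Injective f → Function.Surjective g →
      LinearMap.range f = LinearMap.ker g → T L → T N → T M)

/-- `M` lies in the smallest torsion class containing `B`. -/
def InTorsionClosure (Λ : Type u) [Ring Λ] (B : Type u) [AddCommGroup B] [Module Λ B]
    (M : Type u) [AddCommGroup M] [Module Λ M] : Prop :=
  ∀ T : ∀ (N : Type u) [AddCommGroup N] [Module Λ N], Prop,
    IsTorsionClassPred Λ T → T B → T M

/-! ### Auxiliary lemmas -/

/-- Composition with an injective map preserves being nonzero. -/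
lemma aux_comp_ne_zero {Λ B M N : Type u} [Ring Λ] [AddCommGroup B] [Module Λ B]
    [AddCommGroup M] [Module Λ M] [AddCommGroup N] [Module Λ N]
    (g : M →ₗ[Λ] N) (hg : Function.Injective g) {f : B →ₗ[Λ] M} (hf : f ≠ 0) :
    g ∘ₗ f ≠ 0 := by
  intro h0
  apply hf
  ext b
  apply hg
  have : (g ∘ₗ f) b = (0 : B →ₗ[Λ] N) b := by rw [h0]
  simpa using this

lemma aux_bot_ne_top {Λ M : Type u} [Ring Λ] [AddCommGroup M] [Module Λ M] [Nontrivial M] :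
    (⊥ : Submodule Λ M) ≠ ⊤ := by
  intro e
  obtain ⟨x, hx⟩ := exists_ne (0 : M)
  apply hx
  have hxm : x ∈ (⊥ : Submodule Λ M) := e ▸ Submodule.mem_top
  simpa using hxm

/-- The auxiliary torsion class associated to `B`: finitely generated modules all of whose
nonzero quotients receive a nonzero map from `B`. -/
def auxT (Λ : Type u) [Ring Λ] (B : Type u) [AddCommGroup B] [Module Λ B] :
    ∀ (M : Type u) [AddCommGroup M] [Module Λ M], Prop :=
  fun M _ _ => Module.Finite Λ M ∧
    ∀ U : Submodule Λ M, U ≠ ⊤ → ∃ f : B →ₗ[Λ] M ⧸ U, f ≠ 0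

lemma auxT_self {Λ : Type u} [Ring Λ] (B : Type u) [AddCommGroup B] [Module Λ B]
    [Module.Finite Λ B] : auxT Λ B B := by
  refine ⟨‹_›, fun U hU => ⟨U.mkQ, fun h0 => hU ?_⟩⟩
  have : LinearMap.ker U.mkQ = LinearMap.ker (0 : B →ₗ[Λ] B ⧸ U) := by rw [h0]
  rwa [Submodule.ker_mkQ, LinearMap.ker_zero] at this

lemma auxT_isTorsionClass {Λ : Type u} [Ring Λ] (B : Type u) [AddCommGroup B] [Module Λ B] :
    IsTorsionClassPred Λ (auxT Λ B) := by
  refine ⟨fun M _ _ hM => hM.1, ?_, ?_⟩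
  · -- closure under quotients
    intro M N _ _ _ _ f hf hM
    have hMfin := hM.1
    refine ⟨Module.Finite.of_surjective f hf, ?_⟩
    intro U hU
    have hU' : U.comap f ≠ ⊤ := by
      intro hc
      apply hU
      rw [Submodule.eq_top_iff']
      intro n
      obtain ⟨m, rfl⟩ := hf n
      have : m ∈ U.comap f := hc ▸ Submodule.mem_top
      exact this
    obtain ⟨g, hg⟩ := hM.2 (U.comap f) hU'
    let e : (M ⧸ U.comap f) →ₗ[Λ] N ⧸ U := Submodule.mapQ (U.comap f) U f le_rfl
    have hie : Function.Injective e := by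
      rw [← LinearMap.ker_eq_bot, eq_bot_iff]
      intro x hx
      obtain ⟨m, rfl⟩ := Submodule.Quotient.mk_surjective _ x
      rw [LinearMap.mem_ker, Submodule.mapQ_apply, Submodule.Quotient.mk_eq_zero] at hx
      rw [Submodule.mem_bot, Submodule.Quotient.mk_eq_zero]
      exact hx
    exact ⟨e ∘ₗ g, aux_comp_ne_zero e hie hg⟩
  · -- closure under extensions
    intro L M N _ _ _ _ _ _ f g hfi hgs hfg hL hN
    have hLfin := hL.1
    have hNfin := hN.1
    have hMfin : Module.Finite Λ M := by
      rw [Module.finite_def]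
      apply Submodule.fg_of_fg_map_of_fg_inf_ker g
      · rw [Submodule.map_top, LinearMap.range_eq_top.mpr hgs]
        exact Module.finite_def.mp hNfin
      · rw [top_inf_eq, ← hfg, LinearMap.range_eq_map]
        exact (Module.finite_def.mp hLfin).map f
    refine ⟨hMfin, ?_⟩
    intro U hU
    by_cases hle : LinearMap.range f ≤ U
    · -- the image of L lies inside U : use the quotient N
      have hker : LinearMap.ker g ≤ U := hfg ▸ hle
      have hVt : U.map g ≠ ⊤ := by
        intro hV
        apply hU
        rw [Submodule.eq_top_iff']
        intro m
        have : g m ∈ U.map g := hV ▸ Submodule.mem_top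
        obtain ⟨u, hu, hgu⟩ := this
        have hmu : m - u ∈ LinearMap.ker g := by
          rw [LinearMap.mem_ker, map_sub, hgu, sub_self]
        have : m - u ∈ U := hker hmu
        simpa using U.add_mem this hu
      obtain ⟨φ, hφ⟩ := hN.2 (U.map g) hVt
      have hUV : U ≤ (U.map g).comap g := fun x hx => Submodule.mem_map_of_mem hx
      let e : (M ⧸ U) →ₗ[Λ] N ⧸ U.map g := Submodule.mapQ U (U.map g) g hUV
      have hie : Function.Injective e := by
        rw [← LinearMap.ker_eq_bot, eq_bot_iff]
        intro x hx
        obtain ⟨m, rfl⟩ := Submodule.Quotient.mk_surjective _ x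
        rw [LinearMap.mem_ker, Submodule.mapQ_apply, Submodule.Quotient.mk_eq_zero] at hx
        obtain ⟨u, hu, hgu⟩ := hx
        have hmu : m - u ∈ LinearMap.ker g := by
          rw [LinearMap.mem_ker, map_sub, hgu, sub_self]
        have hmU : m ∈ U := by simpa using U.add_mem (hker hmu) hu
        rw [Submodule.mem_bot, Submodule.Quotient.mk_eq_zero]
        exact hmU
      have hse : Function.Surjective e := by
        intro y
        obtain ⟨n, rfl⟩ := Submodule.Quotient.mk_surjective _ y
        obtain ⟨m, rfl⟩ := hgs n
        exact ⟨Submodule.Quotient.mk m, by rw [Submodule.mapQ_apply]⟩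
      let E := LinearEquiv.ofBijective e ⟨hie, hse⟩
      refine ⟨E.symm.toLinearMap ∘ₗ φ, aux_comp_ne_zero _ E.symm.injective hφ⟩
    · -- the image of L is not inside U : use L
      have hWt : U.comap f ≠ ⊤ := by
        intro hc
        exact hle (LinearMap.range_le_iff_comap.mpr hc)
      obtain ⟨φ, hφ⟩ := hL.2 (U.comap f) hWt
      let e : (L ⧸ U.comap f) →ₗ[Λ] M ⧸ U := Submodule.mapQ (U.comap f) U f le_rfl
      have hie : Function.Injective e := by
        rw [← LinearMap.ker_eq_bot, eq_bot_iff]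
        intro x hx
        obtain ⟨l, rfl⟩ := Submodule.Quotient.mk_surjective _ x
        rw [LinearMap.mem_ker, Submodule.mapQ_apply, Submodule.Quotient.mk_eq_zero] at hx
        rw [Submodule.mem_bot, Submodule.Quotient.mk_eq_zero]
        exact hx
      exact ⟨e ∘ₗ φ, aux_comp_ne_zero e hie hφ⟩

/-- If `C` is a brick and the torsion closure of `B` is contained in that of `C`,
then any nonzero map `B →ₗ C` is surjective. -/
lemma aux_surjective_of_ne_zero {Λ B C : Type u} [Ring Λ] [AddCommGroup B] [Module Λ B]
    [AddCommGroup C] [Module Λ C] [Module.Finite Λ B] [Module.Finite Λ C]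
    (hC : ∀ φ : Module.End Λ C, φ ≠ 0 → IsUnit φ)
    (hcl : ∀ (M : Type u) [AddCommGroup M] [Module Λ M],
        InTorsionClosure Λ B M → InTorsionClosure Λ C M)
    (f : B →ₗ[Λ] C) (hf : f ≠ 0) : Function.Surjective f := by
  set t : Submodule Λ C := LinearMap.range f with ht
  have hBt : InTorsionClosure Λ B ↥t := by
    intro T hT hTB
    exact hT.2.1 B ↥t f.rangeRestrict (LinearMap.surjective_rangeRestrict f) hTB
  have hCt : InTorsionClosure Λ C ↥t := hcl ↥t hBt
  have haux : auxT Λ C ↥t := hCt (auxT Λ C) (auxT_isTorsionClass C) (auxT_self C)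
  have hnt : Nontrivial ↥t := by
    rw [Submodule.nontrivial_iff_ne_bot, ht]
    intro h0
    exact hf (LinearMap.range_eq_bot.mp h0)
  obtain ⟨g₀, hg₀⟩ := haux.2 ⊥ aux_bot_ne_top
  let eqv := Submodule.quotEquivOfEqBot (⊥ : Submodule Λ ↥t) rfl
  let g : C →ₗ[Λ] C := t.subtype ∘ₗ (eqv.toLinearMap ∘ₗ g₀)
  have hg : g ≠ 0 := by
    apply aux_comp_ne_zero t.subtype (Submodule.injective_subtype t)
    exact aux_comp_ne_zero eqv.toLinearMap eqv.injective hg₀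
  have hgs : Function.Surjective g := ((Module.End.isUnit_iff g).mp (hC g hg)).2
  intro c
  obtain ⟨c', hc'⟩ := hgs c
  have : g c' ∈ t := by
    simp only [g, LinearMap.comp_apply, Submodule.subtype_apply]
    exact SetLike.coe_mem _
  rw [hc'] at this
  exact this

/-- over an Artinian ring, two finitely generated bricks generating
the same smallest torsion class are isomorphic. A module `B` is a brick if its
endomorphism ring is a division ring (nontrivial, and every nonzero element is a
unit). -/
theorem stmt_9 {Λ : Type u} [Ring Λ] [IsArtinianRing Λ]
    (B₁ B₂ : Type u) [AddCommGroup B₁] [Module Λ B₁] [AddCommGroup B₂] [Module Λ B₂]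
    [Module.Finite Λ B₁] [Module.Finite Λ B₂]
    (hB₁0 : (1 : Module.End Λ B₁) ≠ 0)
    (hB₁ : ∀ f : Module.End Λ B₁, f ≠ 0 → IsUnit f)
    (hB₂0 : (1 : Module.End Λ B₂) ≠ 0)
    (hB₂ : ∀ f : Module.End Λ B₂, f ≠ 0 → IsUnit f)
    (h : ∀ (M : Type u) [AddCommGroup M] [Module Λ M],
      InTorsionClosure Λ B₁ M ↔ InTorsionClosure Λ B₂ M) :
    Nonempty (B₁ ≃ₗ[Λ] B₂) := by
  have ntB₁ : Nontrivial B₁ := by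
    by_contra hn
    rw [not_nontrivial_iff_subsingleton] at hn
    exact hB₁0 (LinearMap.ext fun x => Subsingleton.elim _ _)
  have ntB₂ : Nontrivial B₂ := by
    by_contra hn
    rw [not_nontrivial_iff_subsingleton] at hn
    exact hB₂0 (LinearMap.ext fun x => Subsingleton.elim _ _)
  have self₁ : InTorsionClosure Λ B₁ B₁ := fun _ _ hB => hB
  have self₂ : InTorsionClosure Λ B₂ B₂ := fun _ _ hB => hB
  have c12 : InTorsionClosure Λ B₁ B₂ := (h B₂).mpr self₂
  have c21 : InTorsionClosure Λ B₂ B₁ := (h B₁).mp self₁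
  -- a nonzero map f : B₁ →ₗ B₂
  have haux12 : auxT Λ B₁ B₂ := c12 (auxT Λ B₁) (auxT_isTorsionClass B₁) (auxT_self B₁)
  obtain ⟨f₀, hf₀⟩ := haux12.2 ⊥ aux_bot_ne_top
  let eqv₂ := Submodule.quotEquivOfEqBot (⊥ : Submodule Λ B₂) rfl
  have hf : (eqv₂.toLinearMap ∘ₗ f₀) ≠ 0 := aux_comp_ne_zero eqv₂.toLinearMap eqv₂.injective hf₀
  set f : B₁ →ₗ[Λ] B₂ := eqv₂.toLinearMap ∘ₗ f₀
  -- a nonzero map g : B₂ →ₗ B₁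
  have haux21 : auxT Λ B₂ B₁ := c21 (auxT Λ B₂) (auxT_isTorsionClass B₂) (auxT_self B₂)
  obtain ⟨g₀, hg₀⟩ := haux21.2 ⊥ aux_bot_ne_top
  let eqv₁ := Submodule.quotEquivOfEqBot (⊥ : Submodule Λ B₁) rfl
  have hg : (eqv₁.toLinearMap ∘ₗ g₀) ≠ 0 := aux_comp_ne_zero eqv₁.toLinearMap eqv₁.injective hg₀
  set g : B₂ →ₗ[Λ] B₁ := eqv₁.toLinearMap ∘ₗ g₀
  -- both are surjective
  have hfs : Function.Surjective f :=
    aux_surjective_of_ne_zero hB₂ (fun M _ _ hm => (h M).mp hm) f hf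
  have hgs : Function.Surjective g :=
    aux_surjective_of_ne_zero hB₁ (fun M _ _ hm => (h M).mpr hm) g hg
  -- the composite g ∘ f is a nonzero endomorphism of B₁, hence bijective
  have hcomp : g ∘ₗ f ≠ 0 := by
    intro h0
    obtain ⟨x, hx⟩ := exists_ne (0 : B₁)
    obtain ⟨y, hy⟩ := (hgs.comp hfs) x
    apply hx
    have : (g ∘ₗ f) y = (0 : B₁ →ₗ[Λ] B₁) y := by rw [h0]
    simp only [LinearMap.comp_apply, LinearMap.zero_apply] at this
    rw [← hy]
    exact this
  have hbij : Function.Bijective (g ∘ₗ f) :=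
    (Module.End.isUnit_iff (g ∘ₗ f : Module.End Λ B₁)).mp (hB₁ _ hcomp)
  have hfi : Function.Injective f := by
    intro a b hab
    apply hbij.1
    simp only [LinearMap.comp_apply, hab]
  exact ⟨LinearEquiv.ofBijective f ⟨hfi, hfs⟩⟩
end

section
/- Let L be a completely semidistributive lattice and a ≤ b in L. Then jlabel[a,b] = { γ(x→y) | x, y ∈ L, x covers y, and a ≤ y < x ≤ b }, where jlabel[a,b] := { j ∈ L | j is completely join-irreducible, j ≤ b, and a ≤ κ(j) }. -/
/-- In a completely semidistributive lattice, for `a ≤ b`,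
`jlabel[a,b] = {j | j completely join-irreducible, j ≤ b, a ≤ κ j}` coincides with
the set of join-irreducible labels `γ(x→y)` of coverings `y ⋖ x` with
`a ≤ y < x ≤ b`. Here `κ j` is the greatest element of `{x | j ⊓ x = j_*}` and
`γ(x→y)` is the minimum of `{z | y ⊔ z = x}`. -/
theorem stmt_10 {α : Type*} [CompleteLattice α]
    (hSDj : ∀ (a b : α) (X : Set α), X.Nonempty → (∀ x ∈ X, a ⊔ x = b) → a ⊔ sInf X = b)
    (hSDm : ∀ (a b : α) (X : Set α), X.Nonempty → (∀ x ∈ X, a ⊓ x = b) → a ⊓ sSup X = b)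
    (κ : α → α)
    (hκ : ∀ j : α, j ≠ sSup {x : α | x < j} →
      IsGreatest {x : α | j ⊓ x = sSup {y : α | y < j}} (κ j))
    {a b : α} (hab : a ≤ b) :
    {j : α | j ≠ sSup {x : α | x < j} ∧ j ≤ b ∧ a ≤ κ j} =
      {j : α | ∃ x y : α, y ⋖ x ∧ a ≤ y ∧ x ≤ b ∧ IsLeast {z : α | y ⊔ z = x} j} := by
  ext j
  simp only [Set.mem_setOf_eq]
  constructor
  · rintro ⟨hj1, hjb, haκ⟩
    obtain ⟨hκmem, hκmax⟩ := hκ j hj1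
    have hκmem' : j ⊓ κ j = sSup {y : α | y < j} := hκmem
    set s := sSup {x : α | x < j} with hs
    have hsj : s ≤ j := sSup_le fun w hw => hw.le
    have hslt : s < j := lt_of_le_of_ne hsj (Ne.symm hj1)
    have hsκ : s ≤ κ j := hκmax (show j ⊓ s = s from inf_eq_right.mpr hsj)
    set x := j ⊔ a with hx
    set y := x ⊓ κ j with hy
    have hjx : j ≤ x := le_sup_left
    have hay : a ≤ y := le_inf le_sup_right haκ
    have hsy : s ≤ y := le_inf (hsj.trans hjx) hsκ
    have hyx : y ≤ x := inf_le_left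
    have hjy : ¬ j ≤ y := by
      intro h
      have h2 : j ⊓ κ j = j := inf_eq_left.mpr (h.trans inf_le_right)
      rw [hκmem'] at h2
      exact hslt.ne' h2.symm
    have hyjx : y ⊔ j = x := by
      refine le_antisymm (sup_le hyx hjx) (sup_le le_sup_right (hay.trans le_sup_left))
    have hylt : y < x := lt_of_le_of_ne hyx (fun h => hjy (h ▸ hjx))
    have hcov : y ⋖ x := by
      refine ⟨hylt, fun z hyz hzx => ?_⟩
      by_cases hjz : j ≤ z
      · exact absurd (hyjx ▸ sup_le hyz.le hjz) hzx.not_ge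
      · have hjzlt : j ⊓ z < j :=
          lt_of_le_of_ne inf_le_left (fun h => hjz (inf_eq_left.mp h))
        have h1 : j ⊓ z ≤ s := le_sSup hjzlt
        have h2 : j ⊓ z = s := le_antisymm h1 (le_inf hsj (hsy.trans hyz.le))
        have h3 : z ≤ κ j := hκmax h2
        exact absurd (le_inf hzx.le h3) hyz.not_ge
    have hm : y ⊔ sInf {z : α | y ⊔ z = x} = x :=
      hSDj y x _ ⟨j, hyjx⟩ (fun z hz => hz)
    have hmj : sInf {z : α | y ⊔ z = x} = j := by
      have h1 : sInf {z : α | y ⊔ z = x} ≤ j := sInf_le hyjx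
      rcases h1.lt_or_eq with h | h
      · have h2 : sInf {z : α | y ⊔ z = x} ≤ y :=
          (le_sSup (show sInf {z : α | y ⊔ z = x} ∈ {x : α | x < j} from h)).trans hsy
        rw [sup_eq_left.mpr h2] at hm
        exact absurd hm hylt.ne
      · exact h
    exact ⟨x, y, hcov, hay, sup_le hjb hab, hyjx, fun z hz => hmj ▸ sInf_le hz⟩
  · rintro ⟨x, y, hcov, hay, hxb, hjmem, hjmin⟩
    have hjmem' : y ⊔ j = x := hjmem
    have hwy : ∀ w : α, w < j → w ≤ y := by
      intro w hw
      rcases hcov.eq_or_eq le_sup_left (hjmem' ▸ sup_le_sup_left hw.le y) with h | h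
      · exact le_sup_right.trans h.le
      · exact absurd (hjmin h) hw.not_ge
    have hsy : sSup {w : α | w < j} ≤ y := sSup_le hwy
    have hj1 : j ≠ sSup {x : α | x < j} := by
      intro h
      have hjy : j ≤ y := h ▸ hsy
      have : y ⊔ j = y := sup_eq_left.mpr hjy
      rw [hjmem'] at this
      exact hcov.lt.ne' this
    obtain ⟨hκmem, hκmax⟩ := hκ j hj1
    have hjb : j ≤ b := (le_sup_right.trans hjmem'.le).trans hxb
    have hjy : ¬ j ≤ y := by
      intro h
      have : y ⊔ j = y := sup_eq_left.mpr h
      rw [hjmem'] at this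
      exact hcov.lt.ne' this
    have hjylt : j ⊓ y < j := lt_of_le_of_ne inf_le_left (fun h => hjy (inf_eq_left.mp h))
    have hsj : sSup {w : α | w < j} ≤ j := sSup_le fun w hw => hw.le
    have h2 : j ⊓ y = sSup {w : α | w < j} :=
      le_antisymm (le_sSup hjylt) (le_inf hsj hsy)
    exact ⟨hj1, hjb, hay.trans (hκmax h2)⟩
end

section
/- Let L be a completely semidistributive lattice, x ∈ L, and j a completely join-irreducible element with x ≤ κ(j). Then x ∨ j covers (x ∨ j) ∧ κ(j) in L, and the minimum of { z ∈ L | ((x ∨ j) ∧ κ(j)) ∨ z = x ∨ j } is j (i.e., the join-irreducible label of this covering is j). -/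
/-- In a completely semidistributive lattice, if `j` is completely
join-irreducible with `κ j` the greatest element of `{z | j ⊓ z = j_*}` and
`x ≤ κ j`, then `(x ⊔ j) ⊓ κ j ⋖ x ⊔ j` and the join-irreducible label of this
covering (the minimum of `{z | ((x ⊔ j) ⊓ κ j) ⊔ z = x ⊔ j}`) is `j`. -/
theorem stmt_11 {α : Type*} [CompleteLattice α]
    (hSDj : ∀ (a b : α) (X : Set α), X.Nonempty → (∀ x ∈ X, a ⊔ x = b) → a ⊔ sInf X = b)
    (hSDm : ∀ (a b : α) (X : Set α), X.Nonempty → (∀ x ∈ X, a ⊓ x = b) → a ⊓ sSup X = b)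
    (x j : α) (hj : j ≠ sSup {y : α | y < j}) (k : α)
    (hk : IsGreatest {z : α | j ⊓ z = sSup {y : α | y < j}} k)
    (hx : x ≤ k) :
    ((x ⊔ j) ⊓ k) ⋖ (x ⊔ j) ∧ IsLeast {z : α | ((x ⊔ j) ⊓ k) ⊔ z = x ⊔ j} j := by
  set s := sSup {y : α | y < j} with hs
  obtain ⟨hjk, hmax⟩ := hk
  simp only [Set.mem_setOf_eq] at hjk
  have hls : ∀ w : α, w < j → w ≤ s := fun w hw => le_sSup hw
  have hsle : s ≤ j := sSup_le fun y hy => hy.le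
  have hslt : s < j := hsle.lt_of_ne fun h => hj h.symm
  have hjnk : ¬ j ≤ k := by
    intro h
    exact hslt.ne' (by rw [inf_eq_left.mpr h] at hjk; exact hjk)
  have hxm : x ≤ (x ⊔ j) ⊓ k := le_inf le_sup_left hx
  have hmj : ((x ⊔ j) ⊓ k) ⊔ j = x ⊔ j :=
    le_antisymm (sup_le inf_le_left le_sup_right)
      (sup_le (hxm.trans le_sup_left) le_sup_right)
  have hmlt : (x ⊔ j) ⊓ k < x ⊔ j := by
    exact lt_of_le_of_ne inf_le_left fun h => hjnk (le_sup_right.trans (h.ge.trans inf_le_right))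
  have hjm : j ⊓ ((x ⊔ j) ⊓ k) = s := by
    rw [← inf_assoc, show j ⊓ (x ⊔ j) = j from inf_eq_left.mpr le_sup_right, hjk]
  constructor
  · refine ⟨hmlt, fun y h1 h2 => ?_⟩
    have hjy : ¬ j ≤ y := fun h => absurd (hmj ▸ sup_le h1.le h : x ⊔ j ≤ y) h2.not_ge
    have h3 : j ⊓ y ≤ s := hls _ (inf_lt_left.mpr hjy)
    have h4 : s ≤ j ⊓ y := hjm ▸ inf_le_inf_left j h1.le
    have hyk : y ≤ k := hmax (le_antisymm h3 h4 : j ⊓ y = s)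
    exact h1.not_ge (le_inf h2.le hyk)
  · refine ⟨hmj, fun z hz => ?_⟩
    by_contra hjz
    have h5 : ((x ⊔ j) ⊓ k) ⊔ sInf {z, j} = x ⊔ j := by
      refine hSDj _ _ _ ⟨z, by simp⟩ fun w hw => ?_
      rcases hw with rfl | rfl
      · exact hz
      · exact hmj
    rw [sInf_pair] at h5
    have hsk : s ≤ k := hjk ▸ inf_le_right
    have h6 : z ⊓ j ≤ k := (hls _ (inf_lt_right.mpr hjz)).trans hsk
    have : x ⊔ j ≤ k := h5 ▸ sup_le inf_le_right h6
    exact hjnk (le_sup_right.trans this)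
end

section
/- Let L be a complete lattice and x = ⨆A a canonical join representation of x ∈ L. Then every element a ∈ A is completely join-irreducible. -/
/-- A canonical join representation: `x = ⨆ A`, `A` is an antichain, and `A`
refines every join representation of `x`. -/
def IsCanonicalJoinRep {α : Type*} [CompleteLattice α] (x : α) (A : Set α) : Prop :=
  sSup A = x ∧ IsAntichain (· ≤ ·) A ∧
    ∀ B : Set α, sSup B = x → ∀ a ∈ A, ∃ b ∈ B, a ≤ b

/-- every element of a canonical join representation is completely
join-irreducible (whenever it equals `⨆ X`, it belongs to `X`). -/
theorem stmt_12 {α : Type*} [CompleteLattice α] (x : α) (A : Set α)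
    (hA : IsCanonicalJoinRep x A) :
    ∀ a ∈ A, ∀ X : Set α, a = sSup X → a ∈ X := by
  obtain ⟨hsup, hanti, href⟩ := hA
  intro a ha X hX
  have hB : sSup ((A \ {a}) ∪ X) = x := by
    rw [sSup_union, ← hX, ← hsup]
    apply le_antisymm
    · exact sup_le (sSup_le_sSup (Set.diff_subset)) (le_sSup ha)
    · apply sSup_le
      intro c hc
      by_cases hca : c = a
      · exact hca ▸ le_sup_right
      · exact le_trans (le_sSup (show c ∈ A \ {a} from ⟨hc, hca⟩)) le_sup_left
  obtain ⟨b, hb, hab⟩ := href _ hB a ha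
  rcases hb with ⟨hbA, hba⟩ | hbX
  · exact absurd hab (hanti ha hbA (fun h => hba (h ▸ rfl)))
  · have : b ≤ a := hX ▸ le_sSup hbX
    exact (le_antisymm hab this) ▸ hbX
end

section
/- Let L be a completely semidistributive lattice, x ∈ L, and j a completely join-irreducible element of L. Then x ≤ κ(j) if and only if x ∨ j_* ≠ x ∨ j, where j_* := ⨆{y ∈ L | y < j}. -/
/-- In a completely semidistributive lattice, for `x` and a
completely join-irreducible `j` with `κ j` the greatest element of
`{z | j ⊓ z = j_*}`, we have `x ≤ κ j` iff `x ⊔ j_* ≠ x ⊔ j`. -/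
theorem stmt_13 {α : Type*} [CompleteLattice α]
    (hSDj : ∀ (a b : α) (X : Set α), X.Nonempty → (∀ x ∈ X, a ⊔ x = b) → a ⊔ sInf X = b)
    (hSDm : ∀ (a b : α) (X : Set α), X.Nonempty → (∀ x ∈ X, a ⊓ x = b) → a ⊓ sSup X = b)
    (x j : α) (hj : j ≠ sSup {y : α | y < j}) (k : α)
    (hk : IsGreatest {z : α | j ⊓ z = sSup {y : α | y < j}} k) :
    x ≤ k ↔ x ⊔ sSup {y : α | y < j} ≠ x ⊔ j := by
  set s := sSup {y : α | y < j} with hs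
  have hsj : s ≤ j := sSup_le fun y hy => hy.le
  have key : (x ⊔ s ≠ x ⊔ j) ↔ ¬ j ≤ x ⊔ s := by
    constructor
    · intro h hle
      exact h (le_antisymm (sup_le_sup_left hsj x) (sup_le le_sup_left hle))
    · intro h he
      exact h (he ▸ le_sup_right)
  rw [key]
  constructor
  · intro hxk hle
    have hsk : s ≤ k := hk.2 (inf_eq_right.mpr hsj)
    have hjk : j ≤ k := le_trans hle (sup_le hxk hsk)
    exact hj (((inf_eq_left.mpr hjk).symm).trans hk.1)
  · intro h
    have hm : j ⊓ (x ⊔ s) = s := by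
      have hlt : j ⊓ (x ⊔ s) < j :=
        lt_of_le_of_ne inf_le_left (fun he => h (he ▸ inf_le_right))
      exact le_antisymm (le_sSup hlt) (le_inf hsj le_sup_right)
    exact le_trans le_sup_left (hk.2 hm)
end

section
/- Let L be a completely semidistributive lattice and x = ⨆A a canonical join representation. Then for all i, j ∈ A with i ≠ j, we have i ≤ κ(j). -/
/-- In a completely semidistributive lattice, if `x = ⨆ A` is a
canonical join representation, then `i ≤ κ j` for all distinct `i, j ∈ A`, where
`κ j` denotes the greatest element of `{z | j ⊓ z = j_*}` (every element of a
canonical join representation is completely join-irreducible). -/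
theorem stmt_14 {α : Type*} [CompleteLattice α]
    (hSDj : ∀ (a b : α) (X : Set α), X.Nonempty → (∀ x ∈ X, a ⊔ x = b) → a ⊔ sInf X = b)
    (hSDm : ∀ (a b : α) (X : Set α), X.Nonempty → (∀ x ∈ X, a ⊓ x = b) → a ⊓ sSup X = b)
    (κ : α → α)
    (hκ : ∀ j : α, j ≠ sSup {y : α | y < j} →
      IsGreatest {z : α | j ⊓ z = sSup {y : α | y < j}} (κ j))
    (x : α) (A : Set α) (hA : IsCanonicalJoinRep x A) :
    ∀ i ∈ A, ∀ j ∈ A, i ≠ j → i ≤ κ j := by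
  obtain ⟨hSup, hAnti, hRef⟩ := hA
  intro i hi j hj hij
  set jstar := sSup {y : α | y < j} with hjstar
  have hstar_le : jstar ≤ j := sSup_le fun y hy => hy.le
  -- key claim: j is not below sSup (A \ {j}) ⊔ jstar
  have key : ¬ j ≤ sSup (A \ {j}) ⊔ jstar := by
    intro hle
    set B : Set α := (A \ {j}) ∪ {y : α | y < j} with hB
    have hBsup : sSup B = x := by
      apply le_antisymm
      · apply sSup_le
        rintro b (⟨hbA, -⟩ | hb)
        · exact hSup ▸ le_sSup hbA
        · exact le_trans hb.le (hSup ▸ le_sSup hj)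
      · rw [← hSup]
        apply sSup_le
        intro a ha
        by_cases haj : a = j
        · subst haj
          refine hle.trans (sup_le ?_ ?_)
          · exact (sSup_le_sSup (Set.subset_union_left)).trans (le_of_eq rfl)
          · exact sSup_le_sSup (Set.subset_union_right)
        · exact le_sSup (Or.inl ⟨ha, haj⟩)
    obtain ⟨b, hbB, hjb⟩ := hRef B hBsup j hj
    rcases hbB with ⟨hbA, hbj⟩ | hb
    · exact hAnti hj hbA (Ne.symm hbj) hjb
    · exact absurd (lt_of_le_of_lt hjb hb) (lt_irrefl j)
  have hji : j ≠ jstar := by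
    intro h
    exact key (h.le.trans le_sup_right)
  obtain ⟨hκmem, hκub⟩ := hκ j hji
  -- show j ⊓ (i ⊔ jstar) = jstar
  have h2 : j ⊓ (i ⊔ jstar) = jstar := by
    apply le_antisymm
    · have hlt : j ⊓ (i ⊔ jstar) < j := by
        rcases lt_or_eq_of_le (inf_le_left : j ⊓ (i ⊔ jstar) ≤ j) with h | h
        · exact h
        · exfalso
          apply key
          have : j ≤ i ⊔ jstar := h.symm.le.trans inf_le_right
          exact this.trans (sup_le_sup_right (le_sSup (Set.mem_diff_singleton.mpr ⟨hi, hij⟩)) _)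
      exact le_sSup hlt
    · exact le_inf hstar_le le_sup_right
  exact le_sup_left.trans (hκub h2)
end

section
/- Let L be a completely semidistributive lattice and x = ⨆A a join representation with A a set of completely join-irreducible elements such that i ≤ κ(j) for all i, j ∈ A with i ≠ j. If x admits a canonical join representation x = ⨆B, then B = A, i.e., x = ⨆A is itself the canonical join representation of x. -/
/-- In a completely semidistributive lattice, let `x = ⨆ A` with `A`
a set of completely join-irreducible elements such that `i ≤ κ j` for all distinct
`i, j ∈ A`. If `x` admits a canonical join representation `x = ⨆ B`, then `B = A`. -/
theorem stmt_15 {α : Type*} [CompleteLattice α]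
    (hSDj : ∀ (a b : α) (X : Set α), X.Nonempty → (∀ x ∈ X, a ⊔ x = b) → a ⊔ sInf X = b)
    (hSDm : ∀ (a b : α) (X : Set α), X.Nonempty → (∀ x ∈ X, a ⊓ x = b) → a ⊓ sSup X = b)
    (κ : α → α)
    (hκ : ∀ j : α, j ≠ sSup {y : α | y < j} →
      IsGreatest {z : α | j ⊓ z = sSup {y : α | y < j}} (κ j))
    (x : α) (A : Set α)
    (hAirr : ∀ a ∈ A, a ≠ sSup {y : α | y < a})
    (hsup : sSup A = x)
    (hortho : ∀ i ∈ A, ∀ j ∈ A, i ≠ j → i ≤ κ j)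
    (B : Set α) (hB : IsCanonicalJoinRep x B) :
    B = A := by
  obtain ⟨hBsup, hBanti, hBref⟩ := hB
  -- each a ∈ A lies in B
  have hAB : A ⊆ B := by
    intro a ha
    have hirr := hAirr a ha
    have hgr := hκ a hirr
    have hmeet : a ⊓ κ a = sSup {y : α | y < a} := hgr.1
    have hanκ : ¬ a ≤ κ a := by
      intro h
      exact hirr (by rw [← hmeet, inf_eq_left.mpr h])
    -- there is b ∈ B with ¬ b ≤ κ a
    have : ∃ b ∈ B, ¬ b ≤ κ a := by
      by_contra h
      push_neg at h
      have : x ≤ κ a := hBsup ▸ sSup_le h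
      exact hanκ (le_trans (hsup ▸ le_sSup ha) this)
    obtain ⟨b, hb, hbκ⟩ := this
    -- b refines A
    obtain ⟨a', ha', hba'⟩ := hBref A hsup b hb
    have haa' : a' = a := by
      by_contra hne
      exact hbκ (hba'.trans (hortho a' ha' a ha hne))
    rw [haa'] at hba'
    -- b = a
    rcases lt_or_eq_of_le hba' with hlt | heq
    · exact absurd (le_trans (le_sSup (by exact hlt : b ∈ {y : α | y < a}))
        (hmeet ▸ inf_le_right)) hbκ
    · rwa [← heq]
  -- B ⊆ A by antichain
  apply Set.Subset.antisymm _ hAB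
  intro b hb
  obtain ⟨a, ha, hba⟩ := hBref A hsup b hb
  have : b = a := by
    by_contra hne
    exact hBanti hb (hAB ha) hne hba
  rwa [this]
end

section
/- Let L be a completely semidistributive lattice and x ∈ L an element admitting a canonical join representation x = ⨆A. Then A = { γ(x→y) | y ∈ L, x covers y }, i.e., the canonical joinands of x are exactly the join-irreducible labels of the coverings below x. -/
/-- In a completely semidistributive lattice, if `x` has a canonical
join representation `x = ⨆ A`, then `A` is exactly the set of join-irreducible
labels `γ(x→y)` (the minimum of `{z | y ⊔ z = x}`) over all coverings `y ⋖ x`. -/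
theorem stmt_16 {α : Type*} [CompleteLattice α]
    (hSDj : ∀ (a b : α) (X : Set α), X.Nonempty → (∀ x ∈ X, a ⊔ x = b) → a ⊔ sInf X = b)
    (hSDm : ∀ (a b : α) (X : Set α), X.Nonempty → (∀ x ∈ X, a ⊓ x = b) → a ⊓ sSup X = b)
    (x : α) (A : Set α) (hA : IsCanonicalJoinRep x A) :
    A = {j : α | ∃ y : α, y ⋖ x ∧ IsLeast {z : α | y ⊔ z = x} j} := by
  obtain ⟨hsup, hanti, href⟩ := hA
  ext a
  simp only [Set.mem_setOf_eq]
  constructor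
  · -- forward direction: every canonical joinand is a label of a covering
    intro haA
    have hax : a ≤ x := hsup ▸ le_sSup haA
    set d := sSup (A \ {a}) with hd
    have hdx : d ≤ x := hsup ▸ sSup_le_sSup Set.diff_subset
    have hxad : a ⊔ d = x := by
      rw [hd, ← sSup_insert, Set.insert_diff_singleton, Set.insert_eq_self.mpr haA, hsup]
    set s := sSup {z | z < a} with hs
    have hsle : s ≤ a := sSup_le fun z hz => hz.le
    have hlt_le : ∀ z, z < a → z ≤ s := fun z hz => le_sSup hz
    -- the antichain condition: a is ≤ no other element of A
    have hnle : ∀ b ∈ A \ {a}, ¬ a ≤ b := by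
      intro b hb
      exact hanti haA hb.1 (fun h => hb.2 (Set.mem_singleton_iff.mpr h.symm))
    -- a is completely join-irreducible: s < a
    have hsa : s < a := by
      rcases lt_or_eq_of_le hsle with h | h
      · exact h
      · exfalso
        have hB : sSup ((A \ {a}) ∪ {z | z < a}) = x := by
          rw [sSup_union, ← hs, h, sup_comm, hxad]
        obtain ⟨b, hbB, hab⟩ := href _ hB a haA
        rcases hbB with hb | hb
        · exact hnle b hb hab
        · exact absurd hab (not_le_of_gt hb)
    set t := d ⊔ s with ht
    -- a is not below t
    have hat : ¬ a ≤ t := by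
      intro h
      have hB : sSup (insert s (A \ {a})) = x := by
        rw [sSup_insert, ← hd]
        refine le_antisymm (sup_le (hsle.trans hax) hdx) ?_
        calc x = a ⊔ d := hxad.symm
        _ ≤ (d ⊔ s) ⊔ d := sup_le_sup_right h d
        _ ≤ s ⊔ d := sup_le (sup_le le_sup_right le_sup_left) le_sup_right
      obtain ⟨b, hbB, hab⟩ := href _ hB a haA
      rcases hbB with hb | hb
      · rw [hb] at hab; exact absurd hab (not_le_of_gt hsa)
      · exact hnle b hb hab
    have htx : t < x :=
      lt_of_le_of_ne (sup_le hdx (hsle.trans hax)) (fun h => hat (h ▸ hax))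
    have hats : a ⊓ t = s := by
      refine le_antisymm ?_ (le_inf hsle le_sup_right)
      exact hlt_le _ (lt_of_le_of_ne inf_le_left (fun h => hat (h ▸ inf_le_right)))
    -- the covering y
    set X := {w | t ≤ w ∧ w < x} with hX
    have htX : t ∈ X := ⟨le_rfl, htx⟩
    have hconst : ∀ w ∈ X, a ⊓ w = s := by
      intro w hw
      refine le_antisymm ?_ (hats ▸ inf_le_inf_left a hw.1)
      refine hlt_le _ (lt_of_le_of_ne inf_le_left (fun h => ?_))
      have haw : a ≤ w := h ▸ inf_le_right
      have : x ≤ w := hxad ▸ sup_le haw (le_sup_left.trans hw.1)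
      exact absurd hw.2 (not_lt_of_ge this)
    set y := sSup X with hy
    have hay : a ⊓ y = s := hSDm a s X ⟨t, htX⟩ hconst
    have hty : t ≤ y := le_sSup htX
    have hyx : y < x := by
      refine lt_of_le_of_ne (sSup_le fun w hw => hw.2.le) (fun h => ?_)
      rw [h, inf_eq_left.mpr hax] at hay
      exact absurd hay.le (not_le_of_gt hsa)
    have hcov : y ⋖ x := by
      refine ⟨hyx, fun c hyc hcx => ?_⟩
      have hcX : c ∈ X := ⟨hty.trans hyc.le, hcx⟩
      exact absurd (le_sSup hcX) (not_le_of_gt hyc)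
    refine ⟨y, hcov, ⟨?_, ?_⟩⟩
    · -- y ⊔ a = x
      show y ⊔ a = x
      refine le_antisymm (sup_le hyx.le hax) ?_
      calc x = a ⊔ d := hxad.symm
      _ ≤ a ⊔ y := sup_le_sup_left ((le_sup_left.trans hty)) a
      _ = y ⊔ a := sup_comm a y
    · -- a is a lower bound of {z | y ⊔ z = x}
      intro z hz
      have hB : sSup {y, z} = x := by rw [sSup_pair]; exact hz
      obtain ⟨b, hbB, hab⟩ := href _ hB a haA
      rcases hbB with hb | hb
      · exfalso
        rw [hb] at hab
        have : a = s := (inf_eq_left.mpr hab).symm.trans hay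
        exact absurd this.le (not_le_of_gt hsa)
      · rwa [Set.mem_singleton_iff.mp hb] at hab
  · -- reverse direction: every label of a covering is a canonical joinand
    rintro ⟨y, hyx, hjmem, hjlb⟩
    obtain ⟨a', ha'A, ha'y⟩ : ∃ a' ∈ A, ¬ a' ≤ y := by
      by_contra h
      push_neg at h
      exact absurd (hsup ▸ sSup_le h) (not_le_of_gt hyx.1)
    have hya' : y ⊔ a' = x := by
      refine le_antisymm (sup_le hyx.1.le (hsup ▸ le_sSup ha'A)) ?_
      have h1 : y < y ⊔ a' := left_lt_sup.mpr ha'y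
      have h2 : y ⊔ a' ≤ x := sup_le hyx.1.le (hsup ▸ le_sSup ha'A)
      rcases lt_or_eq_of_le h2 with h | h
      · exact absurd h (hyx.2 h1)
      · exact h.ge
    have hja' : a ≤ a' := hjlb hya'
    have ha'j : a' ≤ a := by
      have hB : sSup {y, a} = x := by rw [sSup_pair]; exact hjmem
      obtain ⟨b, hbB, hab⟩ := href _ hB a' ha'A
      rcases hbB with hb | hb
      · exact absurd (hb ▸ hab) ha'y
      · rwa [Set.mem_singleton_iff.mp hb] at hab
    rwa [le_antisymm hja' ha'j]
end

section
/- Let L be a completely semidistributive lattice and L₀ the set of elements of L admitting a canonical join representation. For x ∈ L₀ put x_↓ := x ∧ ⨅{ x' ∈ L | x covers x' } and κ̄(x) := ⨅{ κ(j) | j ∈ CJR(x) }. Suppose that for every x ∈ L₀ the equality jlabel[x_↓, x] = { j ∈ L | j completely join-irreducible, j ≤ x, and κ̄(x) ≤ κ(j) } holds. Then for all x, y ∈ L₀: (x ≤ y and κ̄(y) ≤ κ̄(x)) if and only if jlabel[x_↓, x] ⊆ jlabel[y_↓, y]; that is, the kappa order ≤_κ and the core label order ≤_clo on L₀ coincide.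 -/
/-- `jlabel κ a b` is the set of completely join-irreducible elements `j` with
`j ≤ b` and `a ≤ κ j`. -/
def jlabel {α : Type*} [CompleteLattice α] (κ : α → α) (a b : α) : Set α :=
  {j : α | j ≠ sSup {y : α | y < j} ∧ j ≤ b ∧ a ≤ κ j}

/-- `x_↓ := x ⊓ ⨅ {x' | x ⋗ x'}`. -/
def downArrow {α : Type*} [CompleteLattice α] (x : α) : α :=
  x ⊓ sInf {x' : α | x' ⋖ x}

/-- Let `L` be a completely semidistributive lattice, `κ` the kappa
map on completely join-irreducible elements, and for `x ∈ L₀` (with canonical join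
representation `A`) put `κ̄ x := ⨅ (κ '' A)`. Suppose that for every `x ∈ L₀`,
`jlabel[x_↓, x] = {j | j completely join-irreducible, j ≤ x, κ̄ x ≤ κ j}`. Then for
all `x, y ∈ L₀`: `x ≤ y ∧ κ̄ y ≤ κ̄ x` iff `jlabel[x_↓,x] ⊆ jlabel[y_↓,y]`, i.e. the
kappa order and the core label order on `L₀` coincide. -/
theorem stmt_19 {α : Type*} [CompleteLattice α]
    (hSDj : ∀ (a b : α) (X : Set α), X.Nonempty → (∀ x ∈ X, a ⊔ x = b) → a ⊔ sInf X = b)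
    (hSDm : ∀ (a b : α) (X : Set α), X.Nonempty → (∀ x ∈ X, a ⊓ x = b) → a ⊓ sSup X = b)
    (κ : α → α)
    (hκ : ∀ j : α, j ≠ sSup {y : α | y < j} →
      IsGreatest {z : α | j ⊓ z = sSup {y : α | y < j}} (κ j))
    (hyp : ∀ (x : α) (A : Set α), IsCanonicalJoinRep x A →
      jlabel κ (downArrow x) x =
        {j : α | j ≠ sSup {y : α | y < j} ∧ j ≤ x ∧ sInf (κ '' A) ≤ κ j})
    (x y : α) (A B : Set α)
    (hA : IsCanonicalJoinRep x A) (hB : IsCanonicalJoinRep y B) :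
    (x ≤ y ∧ sInf (κ '' B) ≤ sInf (κ '' A)) ↔
      jlabel κ (downArrow x) x ⊆ jlabel κ (downArrow y) y := by
  obtain ⟨hAsup, hAanti, hAref⟩ := hA
  have hcji : ∀ a ∈ A, a ≠ sSup {y : α | y < a} := by
    intro a ha h
    have hsup : sSup ((A \ {a}) ∪ {y : α | y < a}) = x := by
      rw [sSup_union, ← h, ← hAsup]
      apply le_antisymm
      · exact sup_le (sSup_le_sSup Set.diff_subset) (le_sSup ha)
      · apply sSup_le
        intro b hb
        by_cases hba : b = a
        · subst hba; exact le_sup_right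
        · exact le_trans (le_sSup (Set.mem_diff_singleton.mpr ⟨hb, hba⟩)) le_sup_left
    obtain ⟨b, hb, hab⟩ := hAref _ hsup a ha
    rcases hb with ⟨hbA, hba⟩ | hba
    · exact hAanti ha hbA (fun e => hba (e ▸ rfl)) hab
    · exact absurd hab (lt_iff_le_not_ge.mp hba).2
  have hAx := hyp x A ⟨hAsup, hAanti, hAref⟩
  have hBy := hyp y B hB
  constructor
  · rintro ⟨hxy, hk⟩ j hj
    rw [hAx] at hj
    rw [hBy]
    exact ⟨hj.1, hj.2.1.trans hxy, hk.trans hj.2.2⟩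
  · intro hsub
    have hmem : ∀ a ∈ A, a ≤ y ∧ sInf (κ '' B) ≤ κ a := by
      intro a ha
      have h1 : a ∈ jlabel κ (downArrow x) x := by
        rw [hAx]
        exact ⟨hcji a ha, hAsup ▸ le_sSup ha, sInf_le ⟨a, ha, rfl⟩⟩
      have h2 := hsub h1
      rw [hBy] at h2
      exact ⟨h2.2.1, h2.2.2⟩
    constructor
    · rw [← hAsup]; exact sSup_le fun a ha => (hmem a ha).1
    · apply le_sInf; rintro _ ⟨a, ha, rfl⟩; exact (hmem a ha).2
end
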